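/- Let A be an n×n real symmetric positive semidefinite matrix and let X be an n×ℓ real matrix. Then the Nyström approximation A⟨X⟩ = (AX)(XᵀAX)†(AX)ᵀ satisfies A⟨X⟩ = A^{1/2} Π A^{1/2}, where Π is the orthogonal projection matrix onto the column space of A^{1/2}X. -/

import Mathlib

open Matrix MeasureTheory ProbabilityTheory
open scoped Classical

/-- Moore–Penrose pseudoinverse (characterized by the four Penrose conditions). -/
noncomputable def pinv {m n : ℕ} (A : Matrix (Fin m) (Fin n) ℝ) : Matrix (Fin n) (Fin m) ℝ :=
  if h : ∃ B : Matrix (Fin n) (Fin m) ℝ,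
      A * B * A = A ∧ B * A * B = B ∧ (A * B)ᵀ = A * B ∧ (B * A)ᵀ = B * A
  then h.choose else 0

/-- Nyström approximation of `A` with respect to the test matrix `X`. -/
noncomputable def nystrom {n l : ℕ} (A : Matrix (Fin n) (Fin n) ℝ)
    (X : Matrix (Fin n) (Fin l) ℝ) : Matrix (Fin n) (Fin n) ℝ :=
  A * X * pinv (Xᵀ * A * X) * (A * X)ᵀ

/-- Spectral (ℓ² operator) norm of a matrix. -/
noncomputable def specNorm {m n : ℕ} (M : Matrix (Fin m) (Fin n) ℝ) : ℝ :=
  ‖LinearMap.toContinuousLinearMap (Matrix.toEuclideanLin M)‖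

/-- Frobenius norm of a matrix. -/
noncomputable def frobNorm {m n : ℕ} (M : Matrix (Fin m) (Fin n) ℝ) : ℝ :=
  Real.sqrt (∑ i, ∑ j, (M i j) ^ 2)

/-- Euclidean norm of a vector. -/
noncomputable def euclNorm {n : ℕ} (x : Fin n → ℝ) : ℝ :=
  Real.sqrt (∑ i, (x i) ^ 2)

/-- Law of an `n × l` random matrix with independent standard normal entries. -/
noncomputable def gaussianEnsemble (n l : ℕ) : Measure (Fin n → Fin l → ℝ) :=
  Measure.pi fun _ => Measure.pi fun _ => gaussianReal 0 1

/-- `Matrix.PosSemidef.sqrt` as defined in the older Mathlib (removed since). -/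
noncomputable def Matrix.PosSemidef.sqrt {n : Type*} {𝕜 : Type*} [Fintype n] [RCLike 𝕜]
    [PartialOrder 𝕜] [StarOrderedRing 𝕜] [DecidableEq n] {A : Matrix n n 𝕜} (hA : A.PosSemidef) : Matrix n n 𝕜 :=
  hA.1.eigenvectorUnitary.1 * diagonal ((↑) ∘ (√·) ∘ hA.1.eigenvalues) *
  (star hA.1.eigenvectorUnitary : Matrix n n 𝕜)

/-- The psd square root of a psd matrix (junk value `0` otherwise). -/
noncomputable def matSqrt {n : ℕ} (M : Matrix (Fin n) (Fin n) ℝ) : Matrix (Fin n) (Fin n) ℝ :=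
  if hM : M.PosSemidef then hM.sqrt else 0

/-- ℓ² condition number of a symmetric matrix: ratio of the largest to the smallest
eigenvalue (junk value `0` for non-symmetric matrices). -/
noncomputable def kappa {n : ℕ} (M : Matrix (Fin n) (Fin n) ℝ) : ℝ :=
  if hM : M.IsHermitian then (⨆ i, hM.eigenvalues i) / (⨅ i, hM.eigenvalues i) else 0

/-!
Write `S = A^{1/2}` and `B = S X`, so that `A X = S B` and `Xᵀ A X = Bᵀ B`; hence
`A⟨X⟩ = S Q S` with `Q = B (BᵀB)† Bᵀ`, and it suffices to show `Q = Π`.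
From `G G† G = G` for `G = BᵀB` we get `BᵀB (G† G - 1) = 0`, hence `B G† G = B`, i.e. `Q B = B`.
So `Q` fixes the range of `B`, which is that of `Π`, giving `Q Π = Π`; and `Q Π = Q` because
`Π` is symmetric and fixes `B`.
-/

namespace Matrix

variable {n : Type*} [Fintype n]

theorem mul_eq_right_of_range_le {R m p : Type*} [CommSemiring R] [Fintype m] [Fintype p]
    {Q : Matrix m m R} {B : Matrix m n R} {P : Matrix m p R} (hQB : Q * B = B)
    (h : LinearMap.range P.mulVecLin ≤ LinearMap.range B.mulVecLin) : Q * P = P := by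
  refine ext_iff_mulVec.mpr fun v => ?_
  obtain ⟨w, hw⟩ := h ⟨v, rfl⟩
  rw [mulVecLin_apply, mulVecLin_apply] at hw
  rw [← mulVec_mulVec, ← hw, mulVec_mulVec, hQB]

theorem mul_mul_conjTranspose_mul_self_eq_self {R m : Type*} [Ring R] [PartialOrder R]
    [StarRing R] [StarOrderedRing R] [NoZeroDivisors R] [Fintype m] {B : Matrix m n R}
    {P : Matrix n n R} (hP : Bᴴ * B * P * (Bᴴ * B) = Bᴴ * B) : B * P * (Bᴴ * B) = B := by
  have h : Bᴴ * B * (P * (Bᴴ * B) - 1) = 0 := by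
    rw [Matrix.mul_sub, Matrix.mul_one, ← Matrix.mul_assoc, hP, sub_self]
  rwa [conjTranspose_mul_self_mul_eq_zero, Matrix.mul_sub, Matrix.mul_one, sub_eq_zero,
    ← Matrix.mul_assoc] at h

variable [DecidableEq n]

namespace PosSemidef

variable {A : Matrix n n ℝ}

theorem sqrt_eq_cfc (hA : A.PosSemidef) : hA.sqrt = cfc Real.sqrt A := by
  rw [hA.1.cfc_eq, IsHermitian.cfc, Unitary.conjStarAlgAut_apply]
  rfl

open scoped MatrixOrder in
theorem sqrt_mul_sqrt_self (hA : A.PosSemidef) : hA.sqrt * hA.sqrt = A := by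
  rw [sqrt_eq_cfc, ← cfc_mul _ _ A]
  conv_rhs => rw [← cfc_id' ℝ A]
  exact cfc_congr fun x hx => Real.mul_self_sqrt (spectrum_nonneg_of_nonneg hA.nonneg hx)

theorem transpose_sqrt (hA : A.PosSemidef) : hA.sqrtᵀ = hA.sqrt := by
  rw [← conjTranspose_eq_transpose_of_trivial, sqrt_eq_cfc]
  exact cfc_predicate (R := ℝ) _ A

end PosSemidef

theorem transpose_cfc (f : ℝ → ℝ) (G : Matrix n n ℝ) : (cfc f G)ᵀ = cfc f G := by
  rw [← conjTranspose_eq_transpose_of_trivial]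
  exact cfc_predicate (R := ℝ) f G

/-- Since `0⁻¹ = 0`, `cfc (·⁻¹) G` inverts `G` on its range and vanishes on its kernel. -/
theorem IsHermitian.exists_penrose_inverse {G : Matrix n n ℝ} (hG : G.IsHermitian) :
    ∃ B : Matrix n n ℝ,
      G * B * G = G ∧ B * G * B = B ∧ (G * B)ᵀ = G * B ∧ (B * G)ᵀ = B * G := by
  have hmul (f g : ℝ → ℝ) : cfc f G * cfc g G = cfc (fun x => f x * g x) G :=
    (cfc_mul f g G (G.finite_real_spectrum.continuousOn f)
      (G.finite_real_spectrum.continuousOn g)).symm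
  have hid : cfc (fun x : ℝ => x) G = G := cfc_id' ℝ G hG
  have hleft (f : ℝ → ℝ) : G * cfc f G = cfc (fun x => x * f x) G := by rw [← hmul, hid]
  have hright (f : ℝ → ℝ) : cfc f G * G = cfc (fun x => f x * x) G := by rw [← hmul, hid]
  refine ⟨cfc (fun x : ℝ => x⁻¹) G, ?_, ?_, ?_, ?_⟩
  · simp only [hleft, hright, mul_inv_mul_cancel, hid]
  · rw [hright, hmul]
    congr 1 with x
    simpa using mul_inv_mul_cancel x⁻¹
  · rw [hleft, transpose_cfc]
  · rw [hright, transpose_cfc]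

end Matrix

theorem mul_pinv_mul_of_isHermitian {k : ℕ} {G : Matrix (Fin k) (Fin k) ℝ} (hG : G.IsHermitian) :
    G * pinv G * G = G := by
  have h := hG.exists_penrose_inverse
  rw [pinv, dif_pos h]
  exact h.choose_spec.1

theorem mul_pinv_transpose_mul_self_mul_transpose_eq {m k : ℕ} {B : Matrix (Fin m) (Fin k) ℝ}
    {Proj : Matrix (Fin m) (Fin m) ℝ} (hsym : Projᵀ = Proj) (hidem : Proj * Proj = Proj)
    (hrange : LinearMap.range Proj.mulVecLin = LinearMap.range B.mulVecLin) :
    B * pinv (Bᵀ * B) * Bᵀ = Proj := by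
  have hQB : B * pinv (Bᵀ * B) * Bᵀ * B = B := by
    have h := mul_pinv_mul_of_isHermitian (isHermitian_conjTranspose_mul_self B)
    rw [← conjTranspose_eq_transpose_of_trivial, Matrix.mul_assoc _ Bᴴ]
    exact mul_mul_conjTranspose_mul_self_eq_self h
  have hProjB : Proj * B = B := mul_eq_right_of_range_le hidem hrange.ge
  calc B * pinv (Bᵀ * B) * Bᵀ = B * pinv (Bᵀ * B) * (Proj * B)ᵀ := by rw [hProjB]
    _ = B * pinv (Bᵀ * B) * Bᵀ * Proj := by simp only [transpose_mul, hsym, Matrix.mul_assoc]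
    _ = Proj := mul_eq_right_of_range_le hQB hrange.le

/-- The Nyström approximation satisfies
`A⟨X⟩ = A^{1/2} Π A^{1/2}` where `Π` is the orthogonal projection onto the
column space of `A^{1/2} X`. -/
theorem nystrom_eq_sqrt_proj_sqrt {n l : ℕ}
    (A : Matrix (Fin n) (Fin n) ℝ) (hA : A.PosSemidef)
    (X : Matrix (Fin n) (Fin l) ℝ)
    (Proj : Matrix (Fin n) (Fin n) ℝ)
    (hsym : Projᵀ = Proj) (hidem : Proj * Proj = Proj)
    (hrange : LinearMap.range Proj.mulVecLin
      = LinearMap.range (hA.sqrt * X).mulVecLin) :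
    nystrom A X = hA.sqrt * Proj * hA.sqrt := by
  have hS := hA.transpose_sqrt
  have hSS := hA.sqrt_mul_sqrt_self
  set S := hA.sqrt
  have hXAX : Xᵀ * A * X = (S * X)ᵀ * (S * X) := by
    rw [transpose_mul, hS, ← hSS]
    simp only [Matrix.mul_assoc]
  have hAX : A * X = S * (S * X) := by rw [← hSS, Matrix.mul_assoc]
  rw [nystrom, hXAX, hAX, ← mul_pinv_transpose_mul_self_mul_transpose_eq hsym hidem hrange]
  simp only [transpose_mul, hS, Matrix.mul_assoc]
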